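/- Fix $p\in(0,1)$ and for $a\in[0,1]$ let $\phi(a)$ be the unique $s\in[a,1]$ with $p(1-p)(2-s)^2(s-a)=a(1-s)$. Then $\phi$ is increasing on $[0,1]$, differentiable on $(0,1)$, and invertible with increasing inverse; moreover $\phi^{-1}(s)=s$ for $s\in\{0,1\}$ and $0<\phi^{-1}(s)<s<1$ for $s\in(0,1)$. -/

import Mathlib

/-!
The defining equation `paperPhi p a s = 0` is affine in `a`, so it can be solved for `a`:
with `c = p (1 - p)`, `a = c (2 - s)² s / (c (2 - s)² + 1 - s)`. This explicit function of `s`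
has positive derivative on `s ≤ 1`, so it is strictly increasing there; it fixes `0` and `1` and
lies strictly below the diagonal on `(0, 1)`. Hence it is the inverse of `φ`, which is therefore
strictly increasing, continuous (a monotone map onto an interval), and differentiable by the
inverse function rule.
-/

open Set

def paperPhi (p a s : ℝ) : ℝ := p * (1 - p) * (2 - s) ^ 2 * (s - a) - a * (1 - s)

theorem StrictMonoOn.of_leftInvOn {α β : Type*} [Preorder α] [LinearOrder β]
    {f : α → β} {g : β → α} {s : Set α} {t : Set β} (hg : StrictMonoOn g t) (hf : MapsTo f s t)
    (hgf : LeftInvOn g f s) : StrictMonoOn f s := fun a ha b hb hab =>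
  (hg.lt_iff_lt (hf ha) (hf hb)).1 <| by rwa [hgf ha, hgf hb]

theorem StrictMonoOn.continuousOn_Ioo_of_surjOn {α β : Type*} [LinearOrder α]
    [TopologicalSpace α] [OrderTopology α] [LinearOrder β] [TopologicalSpace β] [OrderTopology β]
    [DenselyOrdered β] {f : α → β} {a b : α} (hf : StrictMonoOn f (Icc a b))
    (hsurj : SurjOn f (Icc a b) (Icc (f a) (f b))) : ContinuousOn f (Ioo a b) := fun x hx =>
  have hfx : f x ∈ Ioo (f a) (f b) :=
    ⟨hf (left_mem_Icc.2 (hx.1.trans hx.2).le) (Ioo_subset_Icc_self hx) hx.1,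
      hf (Ioo_subset_Icc_self hx) (right_mem_Icc.2 (hx.1.trans hx.2).le) hx.2⟩
  (hf.continuousAt_of_image_mem_nhds (Icc_mem_nhds hx.1 hx.2)
    (Filter.mem_of_superset (Icc_mem_nhds hfx.1 hfx.2) hsurj)).continuousWithinAt

theorem differentiableOn_of_leftInvOn {𝕜 : Type*} [NontriviallyNormedField 𝕜] {f g : 𝕜 → 𝕜}
    {s t : Set 𝕜} (hs : IsOpen s) (hf : ContinuousOn f s) (hft : MapsTo f s t)
    (hgf : LeftInvOn g f s) (hg : ∀ y ∈ t, DifferentiableAt 𝕜 g y)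
    (hg' : ∀ y ∈ t, deriv g y ≠ 0) : DifferentiableOn 𝕜 f s := fun _ ha =>
  (HasDerivAt.of_local_left_inverse (hf.continuousAt (hs.mem_nhds ha)) (hg _ (hft ha)).hasDerivAt
    (hg' _ (hft ha)) (Filter.eventually_of_mem (hs.mem_nhds ha) hgf)).differentiableAt
    |>.differentiableWithinAt

noncomputable def paperPhiInv (c s : ℝ) : ℝ :=
  c * (2 - s) ^ 2 * s / (c * (2 - s) ^ 2 + (1 - s))

section paperPhiInv

variable {c s : ℝ}

theorem paperPhiInv_denom_pos (hc : 0 < c) (hs : s ≤ 1) : 0 < c * (2 - s) ^ 2 + (1 - s) := by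
  have : 0 < 2 - s := by linarith
  have : 0 ≤ 1 - s := by linarith
  positivity

theorem paperPhiInv_eq_of_paperPhi_eq_zero {p a : ℝ} (hc : 0 < p * (1 - p)) (hs : s ≤ 1)
    (h : paperPhi p a s = 0) : paperPhiInv (p * (1 - p)) s = a := by
  rw [paperPhiInv, div_eq_iff (paperPhiInv_denom_pos hc hs).ne']
  unfold paperPhi at h
  linear_combination h

theorem hasDerivAt_paperPhiInv (hD : c * (2 - s) ^ 2 + (1 - s) ≠ 0) :
    HasDerivAt (paperPhiInv c)
      (c * (c * (2 - s) ^ 4 + (2 - s) * (2 * s ^ 2 - 3 * s + 2)) / (c * (2 - s) ^ 2 + (1 - s)) ^ 2)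
      s := by
  have hsq := ((hasDerivAt_id' s).const_sub 2).fun_pow 2 |>.const_mul c
  have hlin := (hasDerivAt_id' s).const_sub 1
  refine ((hsq.mul (hasDerivAt_id' s)).div (hsq.add hlin) hD).congr_deriv ?_
  norm_num
  ring

theorem deriv_paperPhiInv_pos (hc : 0 < c) (hs : s ≤ 1) : 0 < deriv (paperPhiInv c) s := by
  have hD := paperPhiInv_denom_pos hc hs
  rw [(hasDerivAt_paperPhiInv hD.ne').deriv]
  have : 0 < 2 - s := by linarith
  have : 0 < 2 * s ^ 2 - 3 * s + 2 := by nlinarith [sq_nonneg (4 * s - 3)]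
  positivity

theorem strictMonoOn_paperPhiInv (hc : 0 < c) : StrictMonoOn (paperPhiInv c) (Iic 1) := by
  refine strictMonoOn_of_deriv_pos (convex_Iic 1) (fun x hx => ?_) fun x hx => ?_
  · exact (hasDerivAt_paperPhiInv (paperPhiInv_denom_pos hc hx).ne').continuousAt
      |>.continuousWithinAt
  · rw [interior_Iic] at hx
    exact deriv_paperPhiInv_pos hc hx.le

@[simp]
theorem paperPhiInv_zero : paperPhiInv c 0 = 0 := by
  simp [paperPhiInv]

theorem paperPhiInv_one (hc : c ≠ 0) : paperPhiInv c 1 = 1 := by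
  simp [paperPhiInv, hc]
  norm_num

theorem paperPhiInv_lt_self (hc : 0 < c) (hs : s ∈ Ioo 0 1) : paperPhiInv c s < s := by
  rw [paperPhiInv, div_lt_iff₀ (paperPhiInv_denom_pos hc hs.2.le)]
  nlinarith [mul_pos hs.1 (sub_pos.2 hs.2)]

theorem mapsTo_paperPhiInv (hc : 0 < c) : MapsTo (paperPhiInv c) (Icc 0 1) (Icc 0 1) := by
  intro s hs
  have hmono := (strictMonoOn_paperPhiInv hc).monotoneOn
  have h0 := hmono (show (0 : ℝ) ∈ Iic 1 by norm_num) hs.2 hs.1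
  have h1 := hmono hs.2 self_mem_Iic hs.2
  rw [paperPhiInv_zero] at h0
  rw [paperPhiInv_one hc.ne'] at h1
  exact ⟨h0, h1⟩

end paperPhiInv

theorem stmt_15 (p : ℝ) (hp : p ∈ Set.Ioo (0 : ℝ) 1) (φ : ℝ → ℝ)
    (hφ : ∀ a ∈ Set.Icc (0 : ℝ) 1, φ a ∈ Set.Icc a 1 ∧ paperPhi p a (φ a) = 0) :
    StrictMonoOn φ (Set.Icc (0 : ℝ) 1) ∧
    DifferentiableOn ℝ φ (Set.Ioo (0 : ℝ) 1) ∧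
    ∃ ψ : ℝ → ℝ,
      (∀ a ∈ Set.Icc (0 : ℝ) 1, ψ (φ a) = a) ∧
      (∀ s ∈ Set.Icc (0 : ℝ) 1, φ (ψ s) = s ∧ ψ s ∈ Set.Icc (0 : ℝ) 1) ∧
      StrictMonoOn ψ (Set.Icc (0 : ℝ) 1) ∧
      ψ 0 = 0 ∧ ψ 1 = 1 ∧
      ∀ s ∈ Set.Ioo (0 : ℝ) 1, 0 < ψ s ∧ ψ s < s := by
  have hc : 0 < p * (1 - p) := mul_pos hp.1 (sub_pos.2 hp.2)
  set ψ := paperPhiInv (p * (1 - p))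
  have hψ_mono : StrictMonoOn ψ (Icc 0 1) :=
    (strictMonoOn_paperPhiInv hc).mono Icc_subset_Iic_self
  have hψ_maps : MapsTo ψ (Icc 0 1) (Icc 0 1) := mapsTo_paperPhiInv hc
  have hφ_maps : MapsTo φ (Icc 0 1) (Icc 0 1) := fun a ha =>
    ⟨ha.1.trans (hφ a ha).1.1, (hφ a ha).1.2⟩
  have hleft : LeftInvOn ψ φ (Icc 0 1) := fun a ha =>
    paperPhiInv_eq_of_paperPhi_eq_zero hc (hφ a ha).1.2 (hφ a ha).2
  have hright : RightInvOn ψ φ (Icc 0 1) :=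
    hψ_mono.injOn.rightInvOn_of_leftInvOn hleft hψ_maps hφ_maps
  have hφ_mono : StrictMonoOn φ (Icc 0 1) := hψ_mono.of_leftInvOn hφ_maps hleft
  have hφ_ends : φ 0 = 0 ∧ φ 1 = 1 :=
    ⟨by simpa [ψ] using hright (left_mem_Icc.2 zero_le_one),
      le_antisymm_iff.2 (hφ 1 (right_mem_Icc.2 zero_le_one)).1.symm⟩
  have hφ_cont : ContinuousOn φ (Ioo 0 1) :=
    hφ_mono.continuousOn_Ioo_of_surjOn (by simpa [hφ_ends] using hright.surjOn hψ_maps)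
  refine ⟨hφ_mono, ?_, ψ, hleft, fun s hs => ⟨hright hs, hψ_maps hs⟩, hψ_mono,
    paperPhiInv_zero, paperPhiInv_one hc.ne', fun s hs => ⟨?_, paperPhiInv_lt_self hc hs⟩⟩
  · exact differentiableOn_of_leftInvOn isOpen_Ioo hφ_cont
      (hφ_maps.mono_left Ioo_subset_Icc_self) (hleft.mono Ioo_subset_Icc_self)
      (fun y hy => (hasDerivAt_paperPhiInv (paperPhiInv_denom_pos hc hy.2).ne').differentiableAt)
      (fun y hy => (deriv_paperPhiInv_pos hc hy.2).ne')
  · simpa [ψ] using hψ_mono (left_mem_Icc.2 zero_le_one) (Ioo_subset_Icc_self hs) hs.1
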